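/- Let α_1 < ... < α_n be reals, n ≥ 2, γ ∈ (0,1). The minimum over bipartitions (S, S̄) (with v_1 ∈ S, v_n ∈ S̄) of range(S) + γ·range(S̄) is equal to the minimum over p ∈ {1,...,n-1} of (α_p - α_1) + γ(α_n - α_{p+1}). -/

import Mathlib

/-!
Let `v_{p+1}` be the smallest element of `S̄`. Then `p ≥ 1` as `v₁ ∈ S`, and `v_p ∈ S` by minimality,
so `range(S) ≥ α_p - α_1`, while `range(S̄) = α_n - α_{p+1}` exactly because `v_n ∈ S̄`. Hence the
prefix split at `p` is at least as good as `(S, S̄)`; prefix splits being bipartitions themselves,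
the two minima agree.
-/

open Finset

noncomputable def rng {n : ℕ} (α : Fin n → ℝ) (S : Finset (Fin n)) : ℝ :=
  if h : S.Nonempty then S.sup' h α - S.inf' h α else 0

theorem csInf_eq_csInf_of_subset_of_forall_exists_le {β : Type*} [ConditionallyCompleteLattice β]
    {s t : Set β} (hs : BddBelow s) (ht : t.Nonempty) (hts : t ⊆ s)
    (h : ∀ x ∈ s, ∃ y ∈ t, y ≤ x) : sInf s = sInf t :=
  le_antisymm (csInf_le_csInf hs ht hts) <| le_csInf (ht.mono hts) fun x hx ↦
    let ⟨_, hy, hyx⟩ := h x hx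
    csInf_le_of_le (hs.mono hts) hy hyx

section rng

variable {n : ℕ} {α : Fin n → ℝ} {S : Finset (Fin n)}

theorem sub_le_rng {i j : Fin n} (hi : i ∈ S) (hj : j ∈ S) : α j - α i ≤ rng α S := by
  rw [rng, dif_pos ⟨i, hi⟩]
  exact sub_le_sub (le_sup' α hj) (inf'_le α hi)

theorem rng_eq_of_monotone (hα : Monotone α) {a b : Fin n} (ha : a ∈ S) (hb : b ∈ S)
    (hmin : ∀ x ∈ S, a ≤ x) (hmax : ∀ x ∈ S, x ≤ b) : rng α S = α b - α a := by
  rw [rng, dif_pos ⟨a, ha⟩]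
  congr 1
  · exact le_antisymm (sup'_le _ _ fun x hx ↦ hα (hmax x hx)) (le_sup' α hb)
  · exact le_antisymm (inf'_le α ha) (le_inf' _ _ fun x hx ↦ hα (hmin x hx))

theorem rng_Iic (hα : Monotone α) (p : ℕ) (hp : p < n) :
    rng α (Iic ⟨p, hp⟩) = α ⟨p, hp⟩ - α ⟨0, Nat.zero_lt_of_lt hp⟩ :=
  rng_eq_of_monotone hα (by simp [Fin.le_def]) (by simp)
    (fun _ _ ↦ Fin.le_def.mpr (Nat.zero_le _)) fun _ hx ↦ mem_Iic.mp hx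

theorem rng_compl_Iic (hα : Monotone α) (p : ℕ) (hp : p + 1 < n) :
    rng α (Iic ⟨p, Nat.lt_of_succ_lt hp⟩)ᶜ =
      α ⟨n - 1, Nat.sub_one_lt_of_lt hp⟩ - α ⟨p + 1, hp⟩ := by
  refine rng_eq_of_monotone hα (by simp [Fin.le_def])
    (by simp only [mem_compl, mem_Iic, Fin.le_def, not_le]; omega) ?_ ?_
  · intro x hx
    simp only [mem_compl, mem_Iic, not_le, Fin.lt_def] at hx
    exact Fin.le_def.mpr hx
  · intro x _
    exact Fin.le_def.mpr (by dsimp only; omega)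

end rng

theorem exists_prefix_split_le {n : ℕ} {α : Fin n → ℝ} (hα : Monotone α) (γ : ℝ)
    {S : Finset (Fin n)} (hn : 0 < n) (hfirst : (⟨0, hn⟩ : Fin n) ∈ S)
    (hlast : (⟨n - 1, Nat.sub_one_lt_of_lt hn⟩ : Fin n) ∈ Sᶜ) :
    ∃ p : ℕ, ∃ hp : p + 1 < n, (α ⟨p, Nat.lt_of_succ_lt hp⟩ - α ⟨0, hn⟩) +
      γ * (α ⟨n - 1, Nat.sub_one_lt_of_lt hn⟩ - α ⟨p + 1, hp⟩) ≤ rng α S + γ * rng α Sᶜ := by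
  set m := Sᶜ.min' ⟨_, hlast⟩
  have hm_pos : 0 < m.val := by
    refine Nat.pos_of_ne_zero fun h ↦ mem_compl.mp (min'_mem Sᶜ ⟨_, hlast⟩) ?_
    convert hfirst using 1
    exact Fin.ext h
  have hp : m.val - 1 + 1 < n := by omega
  have hm : (⟨m.val - 1 + 1, hp⟩ : Fin n) = m := Fin.ext (by dsimp only; omega)
  have hpred_mem : (⟨m.val - 1, by omega⟩ : Fin n) ∈ S := by
    by_contra hpred
    have := Fin.le_def.mp (min'_le Sᶜ _ (mem_compl.mpr hpred))
    dsimp only at this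
    omega
  have hrng_compl : rng α Sᶜ = α ⟨n - 1, Nat.sub_one_lt_of_lt hn⟩ - α m :=
    rng_eq_of_monotone hα (min'_mem _ _) hlast (fun x hx ↦ min'_le _ x hx)
      fun x _ ↦ Fin.le_def.mpr (by dsimp only; omega)
  refine ⟨m.val - 1, hp, ?_⟩
  rw [hm, hrng_compl]
  linarith [sub_le_rng (α := α) hfirst hpred_mem]

/-- The minimum of the weighted range sum `range(S) + γ·range(S̄)` over bipartitions
with `v₁ ∈ S` and `vₙ ∈ S̄` equals the minimum over split points `p` of
`(α_p - α_1) + γ(α_n - α_{p+1})` (indices 0-based here). -/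
theorem stmt4 (n : ℕ) (hn : 2 ≤ n) (α : Fin n → ℝ) (hα : StrictMono α)
    (γ : ℝ) :
    sInf {x : ℝ | ∃ S : Finset (Fin n), (⟨0, by omega⟩ : Fin n) ∈ S ∧
        (⟨n - 1, by omega⟩ : Fin n) ∈ Sᶜ ∧ x = rng α S + γ * rng α Sᶜ} =
    sInf {x : ℝ | ∃ p : ℕ, ∃ hp : p + 1 < n,
        x = (α ⟨p, by omega⟩ - α ⟨0, by omega⟩) +
          γ * (α ⟨n - 1, by omega⟩ - α ⟨p + 1, hp⟩)} := by
  have hmono := hα.monotone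
  apply csInf_eq_csInf_of_subset_of_forall_exists_le
  · refine (Set.finite_range fun S : Finset (Fin n) ↦ rng α S + γ * rng α Sᶜ).subset ?_ |>.bddBelow
    rintro x ⟨S, -, -, rfl⟩
    exact ⟨S, rfl⟩
  · exact ⟨_, 0, by omega, rfl⟩
  · rintro x ⟨p, hp, rfl⟩
    refine ⟨Iic ⟨p, by omega⟩, by simp [Fin.le_def],
      by simp only [mem_compl, mem_Iic, Fin.le_def, not_le]; omega, ?_⟩
    rw [rng_Iic hmono p (by omega), rng_compl_Iic hmono p hp]
  · rintro x ⟨S, hfirst, hlast, rfl⟩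
    obtain ⟨p, hp, hle⟩ := exists_prefix_split_le hmono γ (by omega) hfirst hlast
    exact ⟨_, ⟨p, hp, rfl⟩, hle⟩
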